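/- arXiv:2403.20166 — 2 statements merged into one kernel-verified Lean document; each statement's English description precedes it below -/
import Mathlib

section
/- Let ε > 0 and let A be a nonempty subset of the Euclidean plane ℝ². Then A is 2ε-chained if and only if the open ε-neighbourhood O_ε(A) = {p ∈ ℝ² : dist(p, A) < ε} is path-connected. -/
noncomputable section

/-- The Euclidean plane. -/
abbrev Plane := EuclideanSpace ℝ (Fin 2)

/-- Points `p` and `q` are `δ`-chained in `A`: there is a finite sequence of points of `A`
from `p` to `q` with consecutive distances `< δ`. -/
def IsChainedPts (δ : ℝ) (A : Set Plane) (p q : Plane) : Prop :=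
  ∃ n : ℕ, ∃ r : Fin (n + 1) → Plane, (∀ i, r i ∈ A) ∧ r 0 = p ∧ r (Fin.last n) = q ∧
    ∀ i : Fin n, dist (r i.castSucc) (r i.succ) < δ

/-- A set is `δ`-chained iff any two of its points are `δ`-chained in it. -/
def IsChainedSet (δ : ℝ) (A : Set Plane) : Prop :=
  ∀ p ∈ A, ∀ q ∈ A, IsChainedPts δ A p q

/-- The `δ`-chained component of the point `p` in the set `M`. -/
def chainedComponent (δ : ℝ) (M : Set Plane) (p : Plane) : Set Plane :=
  {q | q ∈ M ∧ IsChainedPts δ M p q}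

/-- Distance `ρ(A, B)` between two sets: infimum of pairwise distances. -/
def setRho (A B : Set Plane) : ℝ :=
  sInf {d : ℝ | ∃ a ∈ A, ∃ b ∈ B, d = dist a b}

/-- `D` is a connected component of the subspace `S`. -/
def IsConnCompOf {X : Type*} [TopologicalSpace X] (S D : Set X) : Prop :=
  ∃ x ∈ S, connectedComponentIn S x = D

/-- A simple closed curve: a subset of the plane homeomorphic to the unit circle. -/
def IsSimpleClosedCurve (C : Set Plane) : Prop :=
  Nonempty (C ≃ₜ (Metric.sphere (0 : Plane) 1 : Set Plane))

/-- A simple closed curve `C` separates `A` and `B` iff they lie in two different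
connected components of the complement of `C`. -/
def Separates (C A B : Set Plane) : Prop :=
  ∃ D E : Set Plane, IsConnCompOf Cᶜ D ∧ IsConnCompOf Cᶜ E ∧ D ≠ E ∧ A ⊆ D ∧ B ⊆ E

/-
Both directions rest on the fact that the ε-balls around points of `A` lie in `O_ε(A)`.
If `A` is 2ε-chained, consecutive points `a, b` of a chain are joined inside `O_ε(A)` by the
two segments through their midpoint, which is within ε of both. Conversely, let `T` be the
ε-thickening of the 2ε-chained component of some `p ∈ A`. Every `x ∈ O_ε(A)` is within ε of
some `a ∈ A`, and every point within ε of `a` lies in `T` iff `a` is in the component; so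
membership in `T` is locally constant on `O_ε(A)`, and connectedness puts every `q ∈ A` in `T`,
hence in the component.
-/

open Metric Topology

section PseudoMetricSpace

variable {X : Type*} [PseudoMetricSpace X] {ε : ℝ} {A : Set X} {a : X}

theorem ball_subset_setOf_infDist_lt (ha : a ∈ A) : ball a ε ⊆ {y | infDist y A < ε} :=
  fun _ hy => (infDist_le_dist_of_mem ha).trans_lt hy

theorem subset_setOf_infDist_lt (hε : 0 < ε) : A ⊆ {y | infDist y A < ε} :=
  fun _ ha => ball_subset_setOf_infDist_lt ha (mem_ball_self hε)

end PseudoMetricSpace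

section NormedSpace

variable {E : Type*} [NormedAddCommGroup E] [NormedSpace ℝ E] {ε : ℝ} {A : Set E} {a b x : E}

theorem joinedIn_setOf_infDist_lt_of_dist_lt (ha : a ∈ A) (hxa : dist x a < ε) :
    JoinedIn {y | infDist y A < ε} x a :=
  .of_segment_subset <| ((convex_ball a ε).segment_subset hxa (mem_ball_self
    (dist_nonneg.trans_lt hxa))).trans (ball_subset_setOf_infDist_lt ha)

theorem joinedIn_setOf_infDist_lt_of_dist_lt_two_mul (ha : a ∈ A) (hb : b ∈ A)
    (hab : dist a b < 2 * ε) : JoinedIn {y | infDist y A < ε} a b := by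
  have h2 : ‖(2 : ℝ)‖ = 2 := by norm_num
  have hma : dist (midpoint ℝ a b) a < ε := by rw [dist_midpoint_left, h2]; linarith
  have hmb : dist (midpoint ℝ a b) b < ε := by rw [dist_midpoint_right, h2]; linarith
  exact (joinedIn_setOf_infDist_lt_of_dist_lt ha hma).symm.trans
    (joinedIn_setOf_infDist_lt_of_dist_lt hb hmb)

end NormedSpace

section Chains

variable {δ ε : ℝ} {A : Set Plane} {p q r a x : Plane}

theorem isChainedPts_refl (hp : p ∈ A) : IsChainedPts δ A p p :=
  ⟨0, fun _ => p, fun _ => hp, rfl, rfl, fun i => i.elim0⟩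

theorem IsChainedPts.snoc (h : IsChainedPts δ A p q) (hr : r ∈ A) (hqr : dist q r < δ) :
    IsChainedPts δ A p r := by
  obtain ⟨n, s, hsA, hs0, hsq, hsd⟩ := h
  refine ⟨n + 1, Fin.snoc s r, fun i => ?_, ?_, by simp, fun i => ?_⟩
  · cases i using Fin.lastCases with
    | last => simpa using hr
    | cast i => simpa using hsA i
  · rw [← Fin.castSucc_zero, Fin.snoc_castSucc, hs0]
  · cases i using Fin.lastCases with
    | last => rwa [Fin.succ_last, Fin.snoc_last, Fin.snoc_castSucc, hsq]
    | cast i => rw [Fin.succ_castSucc, Fin.snoc_castSucc, Fin.snoc_castSucc]; exact hsd i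

theorem IsChainedPts.joinedIn (hε : 0 < ε) (h : IsChainedPts (2 * ε) A p q) :
    JoinedIn {y | infDist y A < ε} p q := by
  obtain ⟨n, s, hsA, rfl, rfl, hsd⟩ := h
  have hjoin : ∀ i : Fin (n + 1), JoinedIn {y | infDist y A < ε} (s 0) (s i) := by
    intro i
    induction i using Fin.induction with
    | zero => exact .refl (subset_setOf_infDist_lt hε (hsA 0))
    | succ i ih =>
      exact ih.trans (joinedIn_setOf_infDist_lt_of_dist_lt_two_mul (hsA _) (hsA _) (hsd i))
  exact hjoin (Fin.last n)

theorem mem_thickening_chainedComponent_iff (ha : a ∈ A) (hxa : dist x a < ε) :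
    x ∈ thickening ε (chainedComponent (2 * ε) A p) ↔ a ∈ chainedComponent (2 * ε) A p := by
  refine ⟨fun hx => ?_, fun hac => mem_thickening_iff.2 ⟨a, hac, hxa⟩⟩
  obtain ⟨b, ⟨-, hpb⟩, hxb⟩ := mem_thickening_iff.1 hx
  refine ⟨ha, hpb.snoc ha ?_⟩
  calc dist b a ≤ dist x b + dist x a := dist_triangle_left b a x
    _ < 2 * ε := by linarith

theorem IsChainedSet.isPathConnected (hε : 0 < ε) (hA : A.Nonempty)
    (h : IsChainedSet (2 * ε) A) : IsPathConnected {y | infDist y A < ε} := by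
  obtain ⟨a, ha⟩ := hA
  refine ⟨a, subset_setOf_infDist_lt hε ha, fun y hy => ?_⟩
  obtain ⟨b, hb, hyb⟩ := (infDist_lt_iff ⟨a, ha⟩).1 hy
  exact ((h a ha b hb).joinedIn hε).trans (joinedIn_setOf_infDist_lt_of_dist_lt hb hyb).symm

theorem IsPreconnected.isChainedSet (hε : 0 < ε) (h : IsPreconnected {y | infDist y A < ε}) :
    IsChainedSet (2 * ε) A := by
  intro p hp q hq
  set T := thickening ε (chainedComponent (2 * ε) A p)
  have hdist : ∀ {a : Plane}, dist a a < ε := by simpa using hε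
  have hT : ∀ x ∈ {y | infDist y A < ε}, ∀ᶠ y in 𝓝[{y | infDist y A < ε}] x, x ∈ T ↔ y ∈ T := by
    intro x hx
    obtain ⟨a, ha, hxa⟩ := (infDist_lt_iff ⟨p, hp⟩).1 hx
    filter_upwards [mem_nhdsWithin_of_mem_nhds (isOpen_ball.mem_nhds hxa)] with y hya
    exact (mem_thickening_chainedComponent_iff ha hxa).trans
      (mem_thickening_chainedComponent_iff ha hya).symm
  have hpq : p ∈ T ↔ q ∈ T := h.induction₂ (fun x y => x ∈ T ↔ y ∈ T) hT
    (fun _ _ _ _ _ _ => Iff.trans) (fun _ _ _ _ => Iff.symm)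
    (subset_setOf_infDist_lt hε hp) (subset_setOf_infDist_lt hε hq)
  have hpT : p ∈ T := (mem_thickening_chainedComponent_iff hp hdist).2 ⟨hp, isChainedPts_refl hp⟩
  exact ((mem_thickening_chainedComponent_iff hq hdist).1 (hpq.1 hpT)).2

end Chains

theorem stmt_14 (ε : ℝ) (hε : 0 < ε) (A : Set Plane) (hA : A.Nonempty) :
    IsChainedSet (2 * ε) A ↔
      IsPathConnected {p : Plane | Metric.infDist p A < ε} :=
  ⟨IsChainedSet.isPathConnected hε hA,
    fun h => h.isConnected.isPreconnected.isChainedSet hε⟩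
end
end

section
/- Let ε > 0 and let A be a nonempty bounded 2ε-chained subset of the Euclidean plane ℝ². Then for every point r in the closed ε-neighbourhood B_ε(A) = {p ∈ ℝ² : dist(p, A) ≤ ε}, the set B_ε(A) \ {r} is path-connected. In particular, B_ε(A) is path-connected and has no cut points. -/
noncomputable section

/-!
The closed ε-neighbourhood of `A` is the union of the closed balls `closedBall c ε` over
`c ∈ closure A` (the plane is proper). A closed ball with one point removed stays path-connected
in dimension at least two: a segment from `x` can avoid the removed point `r` by aiming at one of
two points `z₁, z₂` with `z₁ - r, z₂ - r` linearly independent. Two balls whose centres are less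
than `2ε` apart share a point other than `r` near the midpoint of the centres, so the
`2ε`-chains of `A` link all the punctured balls together. For the unpunctured neighbourhood,
puncture it at a point outside it, unless it is the whole plane.
-/
open Metric Set Relation
open scoped Convex Topology
open Filter

section PathConnected

variable {X ι : Type*} [TopologicalSpace X]

theorem IsPathConnected.biUnion_of_reflTransGen {t : Set ι} {s : ι → Set X} (ht : t.Nonempty)
    (H : ∀ i ∈ t, IsPathConnected (s i))
    (K : ∀ i ∈ t, ∀ j ∈ t, ReflTransGen (fun i j => (s i ∩ s j).Nonempty ∧ i ∈ t) i j) :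
    IsPathConnected (⋃ i ∈ t, s i) := by
  obtain ⟨i₀, hi₀⟩ := ht
  obtain ⟨x₀, hx₀⟩ := (H i₀ hi₀).nonempty
  have hsub : ∀ i ∈ t, s i ⊆ ⋃ i ∈ t, s i := fun i hi => subset_biUnion_of_mem hi
  have joined : ∀ j, ReflTransGen (fun i j => (s i ∩ s j).Nonempty ∧ i ∈ t) i₀ j → j ∈ t →
      ∀ y ∈ s j, JoinedIn (⋃ i ∈ t, s i) x₀ y := by
    intro j hchain
    induction hchain with
    | refl => exact fun _ y hy => ((H i₀ hi₀).joinedIn x₀ hx₀ y hy).mono (hsub i₀ hi₀)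
    | tail _ hjk ih =>
      intro hk y hy
      obtain ⟨⟨z, hzj, hzk⟩, hj⟩ := hjk
      exact (ih hj z hzj).trans (((H _ hk).joinedIn z hzk y hy).mono (hsub _ hk))
  refine ⟨x₀, mem_biUnion hi₀ hx₀, fun y hy => ?_⟩
  obtain ⟨j, hj, hyj⟩ := mem_iUnion₂.1 hy
  exact joined j (K i₀ hi₀ j hj) hj y hyj

end PathConnected

section Convex

variable {E : Type*} [AddCommGroup E] [Module ℝ E] {x r z₁ z₂ : E}

theorem eq_of_mem_segment_of_mem_segment (hz : LinearIndependent ℝ ![z₁ - r, z₂ - r])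
    (h₁ : r ∈ [x -[ℝ] z₁]) (h₂ : r ∈ [x -[ℝ] z₂]) : x = r := by
  obtain ⟨a, b, -, -, hab, hr₁⟩ := h₁
  obtain ⟨c, d, -, -, hcd, hr₂⟩ := h₂
  have e₁ : a • (x - r) + b • (z₁ - r) = 0 := by
    linear_combination (norm := module) hr₁ - hab • r
  have e₂ : c • (x - r) + d • (z₂ - r) = 0 := by
    linear_combination (norm := module) hr₂ - hcd • r
  -- eliminate `x - r` between the two relations
  obtain ⟨-, had⟩ := LinearIndependent.pair_iff.1 hz (c * b) (-(a * d)) (by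
    linear_combination (norm := module) c • e₁ - a • e₂)
  rcases mul_eq_zero.1 (neg_eq_zero.1 had) with rfl | rfl
  · have hz₁r : z₁ - r = 0 := by simpa [show b = 1 by linarith] using e₁
    exact absurd hz₁r (by simpa using hz.ne_zero 0)
  · exact sub_eq_zero.1 (by simpa [show c = 1 by linarith] using e₂)

theorem notMem_segment_of_linearIndependent (hz : LinearIndependent ℝ ![z₁ - r, z₂ - r]) :
    r ∉ [z₁ -[ℝ] z₂] := by
  rintro ⟨a, b, -, -, hab, hr⟩
  have h := LinearIndependent.pair_iff.1 hz a b (by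
    linear_combination (norm := module) hr - hab • r)
  linarith [h.1, h.2]

variable [TopologicalSpace E] [IsTopologicalAddGroup E] [ContinuousSMul ℝ E] {K : Set E}

theorem Convex.isPathConnected_diff_singleton (hK : Convex ℝ K) (hz₁ : z₁ ∈ K) (hz₂ : z₂ ∈ K)
    (hz : LinearIndependent ℝ ![z₁ - r, z₂ - r]) : IsPathConnected (K \ {r}) := by
  have joined {x y : E} (hx : x ∈ K) (hy : y ∈ K) (h : r ∉ [x -[ℝ] y]) :
      JoinedIn (K \ {r}) x y :=
    JoinedIn.of_segment_subset fun w hw =>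
      ⟨hK.segment_subset hx hy hw, fun hwr => h (mem_singleton_iff.1 hwr ▸ hw)⟩
  have hz₁r : z₁ ≠ r := fun h => by simpa [h] using hz.ne_zero 0
  refine ⟨z₁, ⟨hz₁, hz₁r⟩, fun x ⟨hx, hxr⟩ => ?_⟩
  by_cases h₁ : r ∈ [x -[ℝ] z₁]
  · have h₂ : r ∉ [x -[ℝ] z₂] := fun h₂ => hxr (eq_of_mem_segment_of_mem_segment hz h₁ h₂)
    exact (joined hz₁ hz₂ (notMem_segment_of_linearIndependent hz)).trans (joined hx hz₂ h₂).symm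
  · exact (joined hx hz₁ h₁).symm

end Convex

section Normed

variable {E : Type*} [NormedAddCommGroup E] [NormedSpace ℝ E]

theorem nonempty_ball_diff_singleton [Nontrivial E] (c r : E) {δ : ℝ} (hδ : 0 < δ) :
    (ball c δ \ {r}).Nonempty :=
  ((infinite_of_mem_nhds c (ball_mem_nhds c hδ)).sdiff (finite_singleton r)).nonempty

theorem exists_mem_closedBall_linearIndependent_sub_pair (h : 1 < Module.rank ℝ E) (c r : E)
    {s : ℝ} (hs : 0 < s) :
    ∃ z₁ ∈ closedBall c s, ∃ z₂ ∈ closedBall c s, LinearIndependent ℝ ![z₁ - r, z₂ - r] := by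
  have : Nontrivial E := (rank_pos_iff_nontrivial (R := ℝ)).1 (zero_lt_one.trans h)
  obtain ⟨z, hz, hzr⟩ := nonempty_ball_diff_singleton c r hs
  obtain ⟨w, hw⟩ := exists_linearIndependent_pair_of_one_lt_rank h (sub_ne_zero.2 hzr)
  have near : ∀ᶠ t : ℝ in 𝓝[≠] 0, z + t • w ∈ ball c s := by
    have hcont : Tendsto (fun t : ℝ => z + t • w) (𝓝 0) (𝓝 z) :=
      (by fun_prop : Continuous fun t : ℝ => z + t • w).tendsto' 0 z (by simp)
    exact (hcont.mono_left nhdsWithin_le_nhds).eventually (isOpen_ball.mem_nhds hz)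
  obtain ⟨t, ht, ht0⟩ := (near.and self_mem_nhdsWithin).exists
  refine ⟨z, ball_subset_closedBall hz, z + t • w, ball_subset_closedBall ht, ?_⟩
  refine LinearIndependent.pair_iff.2 fun a b hab => ?_
  obtain ⟨hsum, hbt⟩ := LinearIndependent.pair_iff.1 hw (a + b) (b * t) (by
    linear_combination (norm := module) hab)
  have hb : b = 0 := (mul_eq_zero.1 hbt).resolve_right ht0
  exact ⟨by linarith, hb⟩

theorem isPathConnected_closedBall_diff_singleton (h : 1 < Module.rank ℝ E) (c r : E) {s : ℝ}
    (hs : 0 < s) : IsPathConnected (closedBall c s \ {r}) :=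
  have ⟨_, hz₁, _, hz₂, hz⟩ := exists_mem_closedBall_linearIndependent_sub_pair h c r hs
  (convex_closedBall c s).isPathConnected_diff_singleton hz₁ hz₂ hz

theorem nonempty_closedBall_diff_inter_closedBall_diff [Nontrivial E] {c d : E} {ε : ℝ}
    (h : dist c d < 2 * ε) (r : E) :
    ((closedBall c ε \ {r}) ∩ (closedBall d ε \ {r})).Nonempty := by
  have hmc : dist (midpoint ℝ c d) c = dist c d / 2 := by simp [div_eq_inv_mul]
  have hmd : dist (midpoint ℝ c d) d = dist c d / 2 := by simp [div_eq_inv_mul]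
  obtain ⟨z, hz, hzr⟩ := nonempty_ball_diff_singleton (midpoint ℝ c d) r
    (show 0 < ε - dist c d / 2 by linarith)
  exact ⟨z, ⟨ball_subset_closedBall (ball_subset_ball' (by linarith) hz), hzr⟩,
    ⟨ball_subset_closedBall (ball_subset_ball' (by linarith) hz), hzr⟩⟩

end Normed

theorem setOf_infDist_le_eq_cthickening {α : Type*} [PseudoMetricSpace α] {A : Set α}
    (hA : A.Nonempty) {ε : ℝ} (hε : 0 ≤ ε) : {p | infDist p A ≤ ε} = cthickening ε A := by
  ext p
  rw [mem_ofPred_eq, mem_cthickening_iff, ENNReal.le_ofReal_iff_toReal_le (infEDist_ne_top hA) hε,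
    infDist]

theorem isPathConnected_cthickening_diff_singleton {E : Type*} [NormedAddCommGroup E]
    [NormedSpace ℝ E] [ProperSpace E] (h : 1 < Module.rank ℝ E) {ε : ℝ} (hε : 0 < ε)
    {A : Set E} (hA : A.Nonempty)
    (hchain : ∀ c ∈ closure A, ∀ d ∈ closure A,
      ReflTransGen (fun x y => dist x y < 2 * ε ∧ x ∈ closure A) c d)
    (r : E) : IsPathConnected (cthickening ε A \ {r}) := by
  have : Nontrivial E := (rank_pos_iff_nontrivial (R := ℝ)).1 (zero_lt_one.trans h)
  rw [cthickening_eq_biUnion_closedBall A hε.le]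
  simp only [iUnion_sdiff]
  exact IsPathConnected.biUnion_of_reflTransGen hA.closure
    (fun c _ => isPathConnected_closedBall_diff_singleton h c r hε)
    fun c hc d hd => ReflTransGen.mono (fun x y ⟨hxy, hx⟩ =>
      ⟨nonempty_closedBall_diff_inter_closedBall_diff hxy r, hx⟩) _ _ (hchain c hc d hd)

theorem IsChainedPts.reflTransGen {δ : ℝ} {A : Set Plane} {p q : Plane}
    (h : IsChainedPts δ A p q) : ReflTransGen (fun x y => dist x y < δ ∧ x ∈ A) p q := by
  obtain ⟨n, r, hrA, hr₀, hrn, hdist⟩ := h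
  suffices ∀ i, ReflTransGen (fun x y => dist x y < δ ∧ x ∈ A) p (r i) from hrn ▸ this _
  intro i
  induction i using Fin.induction with
  | zero => exact hr₀ ▸ ReflTransGen.refl
  | succ i ih => exact ih.tail ⟨hdist i, hrA _⟩

theorem IsChainedSet.reflTransGen_closure {δ : ℝ} {A : Set Plane} (hch : IsChainedSet δ A)
    (hδ : 0 < δ) {c d : Plane} (hc : c ∈ closure A) (hd : d ∈ closure A) :
    ReflTransGen (fun x y => dist x y < δ ∧ x ∈ closure A) c d := by
  obtain ⟨a, ha, hca⟩ := Metric.mem_closure_iff.1 hc δ hδ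
  obtain ⟨b, hb, hdb⟩ := Metric.mem_closure_iff.1 hd δ hδ
  have hab : ReflTransGen (fun x y => dist x y < δ ∧ x ∈ closure A) a b :=
    ReflTransGen.mono (fun x y ⟨hxy, hx⟩ => ⟨hxy, subset_closure hx⟩) _ _
      (hch a ha b hb).reflTransGen
  exact .head ⟨hca, hc⟩ (hab.tail ⟨dist_comm d b ▸ hdb, subset_closure hb⟩)

theorem one_lt_rank_plane : 1 < Module.rank ℝ Plane := by
  rw [← Module.finrank_eq_rank, finrank_euclideanSpace_fin]
  norm_num

theorem stmt_16_general (ε : ℝ) (hε : 0 < ε) (A : Set Plane) (hA : A.Nonempty)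
    (hch : IsChainedSet (2 * ε) A) :
    (∀ r ∈ {p : Plane | Metric.infDist p A ≤ ε},
      IsPathConnected ({p : Plane | Metric.infDist p A ≤ ε} \ {r})) ∧
    IsPathConnected {p : Plane | Metric.infDist p A ≤ ε} := by
  rw [setOf_infDist_le_eq_cthickening hA hε.le]
  have punctured (r : Plane) : IsPathConnected (cthickening ε A \ {r}) :=
    isPathConnected_cthickening_diff_singleton one_lt_rank_plane hε hA
      (fun c hc d hd => hch.reflTransGen_closure (by positivity) hc hd) r
  refine ⟨fun r _ => punctured r, ?_⟩
  by_cases huniv : cthickening ε A = univ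
  · exact huniv ▸ isPathConnected_univ
  · obtain ⟨r, hr⟩ := (ne_univ_iff_exists_notMem _).1 huniv
    exact sdiff_singleton_eq_self hr ▸ punctured r

theorem stmt_16 (ε : ℝ) (hε : 0 < ε) (A : Set Plane) (hA : A.Nonempty)
    (hbdd : Bornology.IsBounded A) (hch : IsChainedSet (2 * ε) A) :
    (∀ r ∈ {p : Plane | Metric.infDist p A ≤ ε},
      IsPathConnected ({p : Plane | Metric.infDist p A ≤ ε} \ {r})) ∧
    IsPathConnected {p : Plane | Metric.infDist p A ≤ ε} :=
  stmt_16_general ε hε A hA hch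
end
end
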